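/- The primal-minimizer map λ ↦ x*(λ) satisfies, for all λ₁, λ₂ ∈ ℝᴺ: ‖x*(λ₁) − x*(λ₂)‖ ≤ (1/μ) ‖Z^{1/2}(λ₁ − λ₂)‖. -/

import Mathlib

open Matrix Set
open scoped RealInnerProductSpace

noncomputable section

/-- The positive semidefinite square root (definition removed from Mathlib, restored verbatim). -/
def Matrix.PosSemidef.sqrt {n : Type*} [Fintype n] [DecidableEq n]
    {A : Matrix n n ℝ} (hA : A.PosSemidef) : Matrix n n ℝ :=
  (hA.1.eigenvectorUnitary : Matrix n n ℝ) * diagonal (Real.sqrt ∘ hA.1.eigenvalues) *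
    (star hA.1.eigenvectorUnitary : Matrix n n ℝ)

lemma quad_nonneg {N : ℕ} {Z : Matrix (Fin N) (Fin N) ℝ} (hZ : Z.PosSemidef)
    (x : EuclideanSpace ℝ (Fin N)) : 0 ≤ ⟪x, Matrix.toEuclideanLin Z x⟫ := by
  have := hZ.re_dotProduct_nonneg (WithLp.equiv 2 _ x)
  simp [EuclideanSpace.inner_eq_star_dotProduct, Matrix.toEuclideanLin_apply] at this ⊢
  rwa [dotProduct_comm]

lemma min_quad_growth {E : Type*} [NormedAddCommGroup E] [NormedSpace ℝ E]
    {μ : ℝ} (hμ : 0 < μ) {g : E → ℝ} (hg : StrongConvexOn Set.univ μ g)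
    {x : E} (hx : IsMinOn g Set.univ x) (y : E) :
    g x + μ / 2 * ‖x - y‖ ^ 2 ≤ g y := by
  set c := μ / 2 * ‖x - y‖ ^ 2 with hc
  have hc0 : 0 ≤ c := by positivity
  have key : ∀ t : ℝ, 0 ≤ t → t < 1 → g x + t * c ≤ g y := by
    intro t ht ht1
    have hb : (0:ℝ) ≤ 1 - t := by linarith
    have h1 := hg.2 (mem_univ x) (mem_univ y) ht hb (by ring)
    have h2 : g x ≤ g (t • x + (1 - t) • y) := hx (mem_univ _)
    have h3 : g x ≤ t * g x + (1 - t) * g y - t * (1 - t) * c := by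
      simpa [smul_eq_mul, hc] using h2.trans h1
    rcases eq_or_lt_of_le hb with hb1 | hb1
    · linarith
    · have h4 : (1 - t) * (g x + t * c) ≤ (1 - t) * g y := by nlinarith
      have := (mul_le_mul_iff_right₀ hb1).mp h4
      linarith
  by_contra h
  push_neg at h
  have hd0 : g x ≤ g y := hx (mem_univ y)
  set d := g y - g x with hdd
  have hdc : d < c := by simp [hdd]; linarith
  have hcpos : 0 < c := lt_of_le_of_lt (by linarith) hdc
  have ht0 : 0 ≤ (d / c + 1) / 2 := by
    have : 0 ≤ d / c := div_nonneg (by linarith) hcpos.le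
    linarith
  have ht1 : (d / c + 1) / 2 < 1 := by
    have : d / c < 1 := (div_lt_one hcpos).mpr hdc
    linarith
  have := key _ ht0 ht1
  have hmul : (d / c + 1) / 2 * c = (d + c) / 2 := by
    field_simp
  rw [hmul] at this
  linarith

theorem augLag_strongConvex (N : ℕ) (f : EuclideanSpace ℝ (Fin N) → ℝ) {μ : ℝ}
    (hsc : StrongConvexOn Set.univ μ f) {α : ℝ} (hα : 0 < α)
    (Z : Matrix (Fin N) (Fin N) ℝ) (hZ : Z.PosSemidef) (lam : EuclideanSpace ℝ (Fin N)) :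
    StrongConvexOn Set.univ μ
      (fun x => f x + ⟪lam, Matrix.toEuclideanLin hZ.sqrt x⟫ +
        α / 2 * ⟪x, Matrix.toEuclideanLin Z x⟫) := by
  set S := Matrix.toEuclideanLin hZ.sqrt with hS
  set A := Matrix.toEuclideanLin Z with hA
  have hsym : ∀ u v, ⟪A u, v⟫ = ⟪u, A v⟫ := Matrix.isHermitian_iff_isSymmetric.mp hZ.1
  have hconv : ConvexOn ℝ Set.univ (fun x : EuclideanSpace ℝ (Fin N) =>
      ⟪lam, S x⟫ + α / 2 * ⟪x, A x⟫) := by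
    refine ⟨convex_univ, fun x _ y _ a b ha hb hab => ?_⟩
    have hq : 0 ≤ ⟪x - y, A (x - y)⟫ := quad_nonneg hZ _
    have hxy : ⟪y, A x⟫ = ⟪x, A y⟫ := by rw [← hsym, real_inner_comm]
    simp only [map_add, _root_.map_smul, inner_add_left, inner_add_right, real_inner_smul_left,
      real_inner_smul_right, map_sub, inner_sub_left, inner_sub_right, smul_eq_mul] at hq ⊢
    rw [hxy] at hq ⊢
    have hb' : b = 1 - a := by linarith
    subst hb'
    nlinarith [mul_nonneg (le_of_lt (half_pos hα)) (mul_nonneg (mul_nonneg ha hb) hq)]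
  have h := hsc.add hconv.uniformConvexOn_zero
  have heq : (f + fun x => ⟪lam, S x⟫ + α / 2 * ⟪x, A x⟫) =
      (fun x => f x + ⟪lam, S x⟫ + α / 2 * ⟪x, A x⟫) := by
    funext x; simp [add_assoc]
  rw [heq] at h
  rw [add_zero] at h
  exact h

/-- The augmented Lagrangian `L̃_α(x, λ) = f(x) + ⟨λ, Z^{1/2} x⟩ + (α/2) xᵀ Z x`,
where `Z^{1/2}` is the positive semidefinite square root of `Z`. -/
def augLag (N : ℕ) (f : EuclideanSpace ℝ (Fin N) → ℝ) (α : ℝ)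
    (Z : Matrix (Fin N) (Fin N) ℝ) (hZ : Z.PosSemidef)
    (x lam : EuclideanSpace ℝ (Fin N)) : ℝ :=
  f x + ⟪lam, Matrix.toEuclideanLin hZ.sqrt x⟫ +
    α / 2 * ⟪x, Matrix.toEuclideanLin Z x⟫

/-- The primal-minimizer map satisfies `‖x*(λ₁) − x*(λ₂)‖ ≤ (1/μ) ‖Z^{1/2}(λ₁ − λ₂)‖`. -/
theorem xstar_lipschitz
    (N : ℕ) (hN : 0 < N)
    (f : EuclideanSpace ℝ (Fin N) → ℝ) (μ L : ℝ) (hμ : 0 < μ) (hL : 0 < L)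
    (hf : ContDiff ℝ 2 f)
    (hsc : StrongConvexOn Set.univ μ f)
    (hlip : LipschitzWith L.toNNReal (gradient f))
    (Z : Matrix (Fin N) (Fin N) ℝ) (hZ : Z.PosSemidef) (hZ0 : Z ≠ 0)
    (ρ σ : ℝ)
    (hρ : ρ ∈ spectrum ℝ Z) (hρmax : ∀ c ∈ spectrum ℝ Z, c ≤ ρ)
    (hσ : σ ∈ spectrum ℝ Z) (hσpos : 0 < σ) (hσmin : ∀ c ∈ spectrum ℝ Z, 0 < c → σ ≤ c)
    (α : ℝ) (hα : 0 < α)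
    (xstar : EuclideanSpace ℝ (Fin N) → EuclideanSpace ℝ (Fin N))
    (hxstar : ∀ lam, IsMinOn (fun x => augLag N f α Z hZ x lam) Set.univ (xstar lam))
    :
    ∀ lam₁ lam₂ : EuclideanSpace ℝ (Fin N),
      ‖xstar lam₁ - xstar lam₂‖ ≤
        1 / μ * ‖Matrix.toEuclideanLin hZ.sqrt (lam₁ - lam₂)‖ := by
  intro lam₁ lam₂
  set S := Matrix.toEuclideanLin hZ.sqrt with hSdef
  have hsymS : ∀ u v : EuclideanSpace ℝ (Fin N), ⟪S u, v⟫ = ⟪u, S v⟫ :=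
    Matrix.isHermitian_iff_isSymmetric.mp (by
      unfold Matrix.PosSemidef.sqrt
      simp [Matrix.IsHermitian, Matrix.conjTranspose_mul, Matrix.mul_assoc,
        Matrix.star_eq_conjTranspose] : hZ.sqrt.IsHermitian)
  have hg : ∀ lam, StrongConvexOn Set.univ μ (fun x => augLag N f α Z hZ x lam) :=
    fun lam => augLag_strongConvex N f hsc hα Z hZ lam
  set x₁ := xstar lam₁
  set x₂ := xstar lam₂
  have h1 := min_quad_growth hμ (hg lam₁) (hxstar lam₁) x₂
  have h2 := min_quad_growth hμ (hg lam₂) (hxstar lam₂) x₁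
  rw [norm_sub_rev] at h2
  simp only [augLag] at h1 h2
  set d := ‖x₁ - x₂‖ with hd
  have hsum : μ * d ^ 2 ≤ ⟪lam₁, S x₂⟫ + ⟪lam₂, S x₁⟫ - ⟪lam₁, S x₁⟫ - ⟪lam₂, S x₂⟫ := by
    linarith
  have hCS : ⟪S (lam₁ - lam₂), x₂ - x₁⟫ ≤ ‖S (lam₁ - lam₂)‖ * ‖x₂ - x₁‖ :=
    real_inner_le_norm _ _
  have hexp : ⟪S (lam₁ - lam₂), x₂ - x₁⟫ =
      ⟪lam₁, S x₂⟫ + ⟪lam₂, S x₁⟫ - ⟪lam₁, S x₁⟫ - ⟪lam₂, S x₂⟫ := by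
    rw [hsymS]
    simp only [map_sub, inner_sub_left, inner_sub_right]
    ring
  rw [hexp, norm_sub_rev x₂ x₁, ← hd] at hCS
  have hmain : μ * d ^ 2 ≤ ‖S (lam₁ - lam₂)‖ * d := by linarith
  rcases eq_or_lt_of_le (norm_nonneg (x₁ - x₂)) with h0 | h0
  · rw [← hd] at h0
    rw [← h0]
    exact mul_nonneg (one_div_nonneg.mpr hμ.le) (norm_nonneg _)
  · rw [← hd] at h0
    rw [one_div_mul_eq_div, le_div_iff₀ hμ]
    nlinarith


end
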